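/- arXiv:2411.02696 — 3 statements merged into one kernel-verified Lean document; each statement's English description precedes it below -/
import Mathlib

section
/- Let p be prime and A ⊆ ℤ_{p^n} × ℤ_p. If there exist 0 ≤ i_1 < i_2 < ⋯ < i_s ≤ n−1 and a ∈ ℤ_p such that (p^{i_1}, a) ∈ Z_A and (p^{i_2}, 0), …, (p^{i_s}, 0) ∈ Z_A, then p^s divides |A|. -/
open Finset Complex

section Helpers

open Polynomial in

lemma coeff_eq_of_root_sum_zero (p m : ℕ) (hp : p.Prime) (c : ℕ → ℤ)
    (h : ∑ e ∈ Finset.range (p^(m+1)), (c e : ℂ) *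
      Complex.exp (2 * Real.pi * Complex.I / (p^(m+1) : ℕ)) ^ e = 0) :
    ∀ e e', e < p^(m+1) → e' < p^(m+1) → e % p^m = e' % p^m → c e = c e' := by
  have hN : (p^(m+1) : ℕ) ≠ 0 := pow_ne_zero _ hp.pos.ne'
  set N := p^(m+1) with hNdef
  set ζ : ℂ := Complex.exp (2 * Real.pi * Complex.I / (N : ℕ)) with hζdef
  have hζ : IsPrimitiveRoot ζ N := Complex.isPrimitiveRoot_exp N hN
  set P : Polynomial ℤ := ∑ e ∈ Finset.range N, Polynomial.C (c e) * X ^ e with hPdef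
  have hcoeff : ∀ e, e < N → P.coeff e = c e := by
    intro e he
    rw [hPdef, Polynomial.finset_sum_coeff]
    rw [Finset.sum_eq_single_of_mem e (Finset.mem_range.2 he)]
    · simp
    · intro b _ hb
      rw [Polynomial.coeff_C_mul, Polynomial.coeff_X_pow, if_neg (Ne.symm hb)]
      ring
  have haev : Polynomial.aeval ζ P = 0 := by
    rw [hPdef, map_sum, ← h]
    apply Finset.sum_congr rfl
    intro e _
    simp
  have hdvd : cyclotomic N ℤ ∣ P := by
    rw [Polynomial.cyclotomic_eq_minpoly hζ (Nat.pos_of_ne_zero hN)]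
    exact minpoly.isIntegrallyClosed_dvd (hζ.isIntegral (Nat.pos_of_ne_zero hN)) haev
  obtain ⟨Q, hPQ⟩ := hdvd
  by_cases hP0 : P = 0
  · intro e e' he he' _
    have h1 := hcoeff e he
    have h2 := hcoeff e' he'
    rw [hP0] at h1 h2
    simp at h1 h2
    omega
  have hQ0 : Q ≠ 0 := by rintro rfl; rw [mul_zero] at hPQ; exact hP0 hPQ
  have hpm : 0 < p^m := pow_pos hp.pos m
  have hdegP : P.natDegree ≤ N - 1 := by
    rw [hPdef]
    apply Polynomial.natDegree_sum_le_of_forall_le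
    intro e he
    apply le_trans (Polynomial.natDegree_C_mul_le _ _)
    rw [Polynomial.natDegree_X_pow]
    have := Finset.mem_range.1 he
    omega
  have hdegcyc : (cyclotomic N ℤ).natDegree = p^m * (p-1) := by
    rw [Polynomial.natDegree_cyclotomic, hNdef, Nat.totient_prime_pow hp (Nat.succ_pos m)]
    simp
  have hdegQ : Q.natDegree ≤ p^m - 1 := by
    have hmul : P.natDegree = (cyclotomic N ℤ).natDegree + Q.natDegree := by
      rw [hPQ, Polynomial.natDegree_mul (Polynomial.cyclotomic_ne_zero N ℤ) hQ0]
    obtain ⟨q, hq⟩ : ∃ q, p = q + 2 := ⟨p - 2, by have := hp.two_le; omega⟩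
    have h3 : p ^ m * (p - 1) + p^m = p^m * p := by
      subst hq; rw [show q+2-1 = q+1 from rfl]; ring
    have hNeq : N = p^m * p := by rw [hNdef]; ring
    omega
  have hkey : ∀ e : ℕ, e < N → P.coeff e = Q.coeff (e % p^m) := by
    intro e he
    have hj : e / p^m ∈ Finset.range p := by
      rw [Finset.mem_range]
      apply Nat.div_lt_of_lt_mul
      calc e < N := he
        _ = p^m * p := by rw [hNdef]; ring
    have hmoddiv := Nat.mod_add_div e (p^m)
    have h0 := Nat.mul_div_le e (p^m)
    have hmodlt : e % p^m < p^m := Nat.mod_lt _ hpm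
    rw [hPQ, Polynomial.cyclotomic_prime_pow_eq_geom_sum hp, mul_comm,
      Finset.mul_sum, Polynomial.finset_sum_coeff]
    rw [Finset.sum_eq_single_of_mem (e / p^m) hj]
    · rw [← pow_mul, Polynomial.coeff_mul_X_pow']
      rw [if_pos (Nat.mul_div_le e (p^m))]
      congr 1
      omega
    · intro b _ hb
      rw [← pow_mul, Polynomial.coeff_mul_X_pow']
      split_ifs with hle
      · apply Polynomial.coeff_eq_zero_of_natDegree_lt
        rcases lt_or_gt_of_ne hb with hlt | hgt
        · have h1 : p^m * (b+1) ≤ p^m * (e / p^m) := Nat.mul_le_mul_left _ hlt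
          have h2 : p^m * (b+1) = p^m * b + p^m := by ring
          omega
          
        · have h1 : p^m * (e/p^m + 1) ≤ p^m * b := Nat.mul_le_mul_left _ hgt
          have h2 : p^m * (e/p^m + 1) = p^m * (e/p^m) + p^m := by ring
          omega
      · rfl
  intro e e' he he' hmod
  rw [← hcoeff e he, ← hcoeff e' he', hkey e he, hkey e' he', hmod]


-- fiber decomposition of a count
lemma card_fiber_decomp {α : Type*} [DecidableEq α] (A : Finset α) (g : α → ℕ) (M : ℕ)
    (hg : ∀ z ∈ A, g z < M) (Q : ℕ → Prop) [DecidablePred Q] :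
    (A.filter (fun z => Q (g z))).card
      = ∑ e ∈ (Finset.range M).filter Q, (A.filter (fun z => g z = e)).card := by
  rw [Finset.card_eq_sum_card_fiberwise (f := g) (t := (Finset.range M).filter Q)
    (fun z hz => by
      rw [Finset.mem_coe, Finset.mem_filter] at hz
      rw [Finset.mem_coe, Finset.mem_filter]
      exact ⟨Finset.mem_range.2 (hg z hz.1), hz.2⟩)]
  apply Finset.sum_congr rfl
  intro e he
  rw [Finset.mem_filter] at he
  congr 1
  rw [Finset.filter_filter]
  apply Finset.filter_congr
  intro z _
  constructor
  · rintro ⟨_, h2⟩; exact h2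
  · intro h2; exact ⟨h2 ▸ he.2, h2⟩

-- the residue class {e < p^(M+1) : e % p^M = r} has exactly p elements
lemma card_mod_class (p M r : ℕ) (hp : 0 < p) (hr : r < p^M) :
    ((Finset.range (p^(M+1))).filter (fun e => e % p^M = r)).card = p := by
  have hpm : 0 < p^M := pow_pos hp M
  have himg : (Finset.range (p^(M+1))).filter (fun e => e % p^M = r)
      = (Finset.range p).image (fun j => r + j * p^M) := by
    ext e
    simp only [Finset.mem_filter, Finset.mem_range, Finset.mem_image]
    constructor
    · rintro ⟨h1, h2⟩
      refine ⟨e / p^M, ?_, ?_⟩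
      · apply Nat.div_lt_of_lt_mul
        calc e < p^(M+1) := h1
          _ = p^M * p := by ring
      · have h3 := Nat.mod_add_div e (p^M)
        rw [mul_comm]
        omega
    · rintro ⟨j, hj, rfl⟩
      constructor
      · have h1 : j * p^M + p^M ≤ p * p^M := by
          rw [← Nat.succ_mul]
          exact Nat.mul_le_mul_right _ hj
        have h2 : p^(M+1) = p * p^M := by ring
        omega
      · rw [Nat.add_mul_mod_self_right, Nat.mod_eq_of_lt hr]
  rw [himg, Finset.card_image_of_injective _ (fun j j' hjj => by
    have : j * p^M = j' * p^M := by omega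
    exact Nat.eq_of_mul_eq_mul_right hpm this), Finset.card_range]


lemma count_equi (p M : ℕ) (hp : p.Prime) {α : Type*} [DecidableEq α]
    (A : Finset α) (φ : α → ℕ) (hφ : ∀ z ∈ A, φ z < p^(M+1))
    (h : ∑ z ∈ A, Complex.exp (2 * Real.pi * Complex.I / (p^(M+1) : ℕ)) ^ (φ z) = 0) :
    ∀ e e', e < p^(M+1) → e' < p^(M+1) → e % p^M = e' % p^M →
      (A.filter (fun z => φ z = e)).card = (A.filter (fun z => φ z = e')).card := by
  set ζ : ℂ := Complex.exp (2 * Real.pi * Complex.I / (p^(M+1) : ℕ)) with hζ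
  have hsum : ∑ e ∈ Finset.range (p^(M+1)),
      (((A.filter (fun z => φ z = e)).card : ℤ) : ℂ) * ζ ^ e = 0 := by
    rw [← h]
    rw [← Finset.sum_fiberwise_of_maps_to (g := φ) (t := Finset.range (p^(M+1)))
      (fun z hz => Finset.mem_range.2 (hφ z hz))]
    apply Finset.sum_congr rfl
    intro e _
    rw [Finset.sum_congr rfl (fun z hz => by
      rw [(Finset.mem_filter.1 hz).2])]
    rw [Finset.sum_const, nsmul_eq_mul]
    push_cast
    ring
  intro e e' he he' hmod
  have := coeff_eq_of_root_sum_zero p M hp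
    (fun e => ((A.filter (fun z => φ z = e)).card : ℤ)) hsum e e' he he' hmod
  exact Nat.cast_inj (R := ℤ) |>.mp this

-- one step: D(r) = p * c(r)
lemma step_eq {α : Type*} [DecidableEq α] (A : Finset α) (p M : ℕ) (hp : p.Prime)
    (u ψ : α → ℕ) (hψ : ∀ z ∈ A, ψ z < p^(M+1))
    (hcompat : ∀ z ∈ A, ψ z % p^M = u z % p^M)
    (E : ∀ e e', e < p^(M+1) → e' < p^(M+1) → e % p^M = e' % p^M →
      (A.filter (fun z => ψ z = e)).card = (A.filter (fun z => ψ z = e')).card)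
    (r : ℕ) (hr : r < p^M) :
    (A.filter (fun z => u z % p^M = r)).card = p * (A.filter (fun z => ψ z = r)).card := by
  have h1 : (A.filter (fun z => u z % p^M = r)) = A.filter (fun z => (ψ z) % p^M = r) := by
    apply Finset.filter_congr
    intro z hz
    rw [hcompat z hz]
  rw [h1, card_fiber_decomp A ψ (p^(M+1)) hψ (fun e => e % p^M = r)]
  have h2 : ∀ e ∈ (Finset.range (p^(M+1))).filter (fun e => e % p^M = r),
      (A.filter (fun z => ψ z = e)).card = (A.filter (fun z => ψ z = r)).card := by
    intro e he
    rw [Finset.mem_filter, Finset.mem_range] at he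
    exact E e r he.1 (lt_of_lt_of_le hr (Nat.pow_le_pow_right hp.pos (Nat.le_succ M)))
      (by rw [he.2, Nat.mod_eq_of_lt hr])
  rw [Finset.sum_congr rfl h2, Finset.sum_const, card_mod_class p M r hp.pos hr, smul_eq_mul]

-- crossing: decompose count mod small into counts mod big
lemma cross_eq {α : Type*} [DecidableEq α] (A : Finset α) (u : α → ℕ) (M' M : ℕ)
    (hdvd : M ∣ M') (hM' : 0 < M') (e : ℕ) :
    (A.filter (fun z => u z % M = e)).card
      = ∑ r ∈ (Finset.range M').filter (fun r => r % M = e),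
          (A.filter (fun z => u z % M' = r)).card := by
  have h1 : (A.filter (fun z => u z % M = e))
      = A.filter (fun z => (u z % M') % M = e) := by
    apply Finset.filter_congr
    intro z _
    rw [Nat.mod_mod_of_dvd _ hdvd]
  rw [h1]
  exact card_fiber_decomp A (fun z => u z % M') M' (fun z _ => Nat.mod_lt _ hM')
    (fun r => r % M = e)


lemma exp_frac (N u : ℕ) (hN : N ≠ 0) :
    Complex.exp (2 * Real.pi * Complex.I * u / N)
      = Complex.exp (2 * Real.pi * Complex.I / N) ^ (u % N) := by
  have hN0 : (N : ℂ) ≠ 0 := Nat.cast_ne_zero.2 hN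
  have hu : (u % N : ℕ) + N * (u / N) = u := Nat.mod_add_div u N
  have : (u : ℂ) = (u % N : ℕ) + N * (u / N : ℕ) := by exact_mod_cast congrArg (Nat.cast (R := ℂ)) hu.symm
  rw [← Complex.exp_nat_mul]
  rw [this]
  rw [show 2 * Real.pi * Complex.I * ((u % N : ℕ) + (N : ℂ) * (u / N : ℕ)) / N
      = (u % N : ℕ) * (2 * Real.pi * Complex.I / N) + (u / N : ℕ) * (2 * Real.pi * Complex.I)
      from by field_simp]
  rw [Complex.exp_add, Complex.exp_nat_mul_two_pi_mul_I, mul_one]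

lemma term_eq (p n ii : ℕ) (hp : p.Prime) (hi : ii + 1 ≤ n) (b : ZMod p)
    (z : ZMod (p^n) × ZMod p) :
    Complex.exp (2 * Real.pi * Complex.I *
      ((z.1.val * ((p : ZMod (p ^ n)) ^ ii).val : ℕ) / (p ^ n : ℕ)
        + (z.2.val * b.val : ℕ) / (p : ℕ) : ℂ))
    = Complex.exp (2 * Real.pi * Complex.I / ((p ^ (n - ii - 1 + 1) : ℕ) : ℂ))
        ^ ((z.1.val + z.2.val * b.val * p ^ (n - ii - 1)) % p ^ (n - ii - 1 + 1)) := by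
  have hp0 : (p : ℂ) ≠ 0 := Nat.cast_ne_zero.2 hp.pos.ne'
  haveI : NeZero (p ^ n) := ⟨pow_ne_zero _ hp.pos.ne'⟩
  set M := n - ii - 1 with hM
  have hn : n = ii + (M + 1) := by omega
  -- value of the power of p in ZMod (p^n)
  have hval : ((p : ZMod (p ^ n)) ^ ii).val = p ^ ii := by
    have h1 : (p : ZMod (p ^ n)) ^ ii = ((p ^ ii : ℕ) : ZMod (p ^ n)) := by push_cast; rfl
    rw [h1, ZMod.val_natCast, Nat.mod_eq_of_lt]
    exact Nat.pow_lt_pow_right hp.one_lt (by omega)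
  rw [hval]
  rw [← exp_frac (p ^ (M + 1)) _ (pow_ne_zero _ hp.pos.ne')]
  congr 1
  -- pure field identity
  have h2 : ((p ^ n : ℕ) : ℂ) = (p : ℂ) ^ ii * (p : ℂ) ^ (M + 1) := by
    push_cast
    rw [← pow_add, ← hn]
  have h3 : ((p ^ (M + 1) : ℕ) : ℂ) = (p : ℂ) ^ (M + 1) := by push_cast; ring
  have h4 : (p : ℂ) ^ (M + 1) = (p : ℂ) ^ M * p := by ring
  push_cast
  rw [show ((p:ℂ))^n = (p:ℂ)^ii * (p:ℂ)^(M+1) from by rw [← pow_add, ← hn]]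
  field_simp
  ring

end Helpers

/-- The Fourier transform of the indicator function of `A ⊆ ℤ_{p^n} × ℤ_p` at
`d = (d₁, d₂)`. -/
noncomputable def fourierA (p n : ℕ) (A : Finset (ZMod (p ^ n) × ZMod p))
    (d : ZMod (p ^ n) × ZMod p) : ℂ :=
  ∑ x ∈ A, Complex.exp (2 * Real.pi * Complex.I *
    ((x.1.val * d.1.val : ℕ) / (p ^ n : ℕ) + (x.2.val * d.2.val : ℕ) / (p : ℕ) : ℂ))

/-- If `(p^{i_1}, a) ∈ Z_A` and `(p^{i_2}, 0), …, (p^{i_s}, 0) ∈ Z_A` for some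
`0 ≤ i_1 < i_2 < ⋯ < i_s ≤ n-1` and `a ∈ ℤ_p`, then `p^s` divides `|A|`. -/
theorem pow_dvd_card_of_fourier_zeros (p n s : ℕ) (hp : p.Prime) (hs : 0 < s)
    (A : Finset (ZMod (p ^ n) × ZMod p))
    (i : Fin s → ℕ) (hmono : StrictMono i) (hin : ∀ t, i t ≤ n - 1)
    (a : ZMod p)
    (h1 : fourierA p n A ((p : ZMod (p ^ n)) ^ (i ⟨0, hs⟩), a) = 0)
    (hrest : ∀ t : Fin s, t ≠ ⟨0, hs⟩ →
      fourierA p n A ((p : ZMod (p ^ n)) ^ (i t), (0 : ZMod p)) = 0) :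
    p ^ s ∣ A.card := by
  classical
  rcases Nat.eq_zero_or_pos n with hn | hn
  · -- degenerate case n = 0
    subst hn
    -- s = 1
    have hs1 : s = 1 := by
      by_contra hc
      have h2 : 2 ≤ s := by omega
      have := hmono (show (⟨0, by omega⟩ : Fin s) < ⟨1, by omega⟩ from by
        simp [Fin.lt_def])
      have ha := hin ⟨0, by omega⟩
      have hb := hin ⟨1, by omega⟩
      omega
    subst hs1
    rw [pow_one]
    set φ : ZMod (p^0) × ZMod p → ℕ := fun z => (z.2.val * a.val) % p with hφdef
    have hterm : ∀ z ∈ A, Complex.exp (2 * Real.pi * Complex.I *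
        ((z.1.val * ((p : ZMod (p ^ 0)) ^ (i ⟨0, hs⟩)).val : ℕ) / (p ^ 0 : ℕ)
          + (z.2.val * a.val : ℕ) / (p : ℕ) : ℂ))
        = Complex.exp (2 * Real.pi * Complex.I / ((p^(0+1) : ℕ) : ℂ)) ^ (φ z) := by
      intro z _
      have hv : ((p : ZMod (p ^ 0)) ^ (i ⟨0, hs⟩)).val = 0 := by
        haveI : NeZero (p^0) := ⟨by norm_num⟩
        have := ZMod.val_lt (n := p^0) ((p : ZMod (p ^ 0)) ^ (i ⟨0, hs⟩))
        simpa using this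
      rw [hv, Nat.mul_zero]
      rw [show ((0 : ℕ) : ℂ) / ((p^0 : ℕ) : ℂ) + ((z.2.val * a.val : ℕ) : ℂ) / (p : ℕ)
        = ((z.2.val * a.val : ℕ) : ℂ) / (p : ℕ) from by push_cast; ring]
      rw [show (2 * Real.pi * Complex.I * (((z.2.val * a.val : ℕ) : ℂ) / (p : ℕ)))
        = 2 * Real.pi * Complex.I * ((z.2.val * a.val : ℕ) : ℂ) / ((p : ℕ) : ℂ) from by ring]
      rw [exp_frac p _ hp.pos.ne']
      norm_num [hφdef]
    have hzero : ∑ z ∈ A, Complex.exp (2 * Real.pi * Complex.I / ((p^(0+1) : ℕ) : ℂ)) ^ (φ z) = 0 := by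
      rw [← Finset.sum_congr rfl hterm]
      exact h1
    have hE := count_equi p 0 hp A φ
      (fun z _ => by simpa using Nat.mod_lt _ hp.pos) hzero
    have hcard : A.card = ∑ e ∈ Finset.range (p^(0+1)),
        (A.filter (fun z => φ z = e)).card := by
      exact Finset.card_eq_sum_card_fiberwise
        (fun z _ => Finset.mem_range.2 (by simpa [hφdef] using Nat.mod_lt (z.2.val * a.val) hp.pos))
    rw [hcard]
    rw [Finset.sum_congr rfl (fun e he => hE e 0 (Finset.mem_range.1 he)
      (by simpa using hp.pos) (by simp [Nat.mod_one]))]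
    rw [Finset.sum_const, Finset.card_range, smul_eq_mul]
    simpa using Dvd.intro _ rfl
  · -- main case n ≥ 1
    have hile : ∀ t : Fin s, i t + 1 ≤ n := fun t => by have := hin t; omega
    set b : Fin s → ZMod p := fun t => if t = ⟨0, hs⟩ then a else 0 with hbdef
    have hfour : ∀ t : Fin s, fourierA p n A ((p : ZMod (p ^ n)) ^ (i t), b t) = 0 := by
      intro t
      by_cases ht : t = ⟨0, hs⟩
      · subst ht; simpa [hbdef] using h1
      · have := hrest t ht
        simpa [hbdef, ht] using this
    set φ : Fin s → ZMod (p^n) × ZMod p → ℕ := fun t z =>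
      (z.1.val + z.2.val * (b t).val * p ^ (n - i t - 1)) % p ^ (n - i t - 1 + 1) with hφdef
    have hφlt : ∀ t : Fin s, ∀ z, φ t z < p ^ (n - i t - 1 + 1) := fun t z =>
      Nat.mod_lt _ (pow_pos hp.pos _)
    have hE : ∀ t : Fin s, ∀ e e', e < p^(n - i t - 1 + 1) → e' < p^(n - i t - 1 + 1) →
        e % p^(n - i t - 1) = e' % p^(n - i t - 1) →
        (A.filter (fun z => φ t z = e)).card = (A.filter (fun z => φ t z = e')).card := by
      intro t
      apply count_equi p (n - i t - 1) hp A (φ t) (fun z _ => hφlt t z)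
      have := hfour t
      unfold fourierA at this
      rw [← this]
      exact Finset.sum_congr rfl (fun z _ => (term_eq p n (i t) hp (hile t) (b t) z).symm)
    have hcompat : ∀ t : Fin s, ∀ z, φ t z % p ^ (n - i t - 1) = z.1.val % p ^ (n - i t - 1) := by
      intro t z
      rw [hφdef]
      rw [Nat.mod_mod_of_dvd _ (pow_dvd_pow p (Nat.le_succ _)), Nat.add_mul_mod_self_right]
    -- main induction
    have main : ∀ t : ℕ, ∀ ht : t < s, ∀ r, r < p ^ (n - i ⟨t, ht⟩ - 1) →
        p^(t+1) ∣ (A.filter (fun z => z.1.val % p ^ (n - i ⟨t, ht⟩ - 1) = r)).card := by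
      intro t
      induction t with
      | zero =>
        intro ht r hr
        rw [step_eq A p (n - i ⟨0, ht⟩ - 1) hp (fun z => z.1.val) (φ ⟨0, ht⟩)
          (fun z _ => hφlt ⟨0, ht⟩ z) (fun z _ => hcompat ⟨0, ht⟩ z) (hE ⟨0, ht⟩) r hr]
        rw [pow_one]
        exact dvd_mul_right _ _
      | succ t ih =>
        intro ht r hr
        have ht' : t < s := by omega
        rw [step_eq A p (n - i ⟨t+1, ht⟩ - 1) hp (fun z => z.1.val) (φ ⟨t+1, ht⟩)
          (fun z _ => hφlt ⟨t+1, ht⟩ z) (fun z _ => hcompat ⟨t+1, ht⟩ z) (hE ⟨t+1, ht⟩) r hr]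
        -- φ at t+1 uses b = 0
        have hb0 : b ⟨t+1, ht⟩ = 0 := by
          rw [hbdef]
          simp only [if_neg (by simp [Fin.ext_iff] : (⟨t+1, ht⟩ : Fin s) ≠ ⟨0, hs⟩)]
        haveI : NeZero p := ⟨hp.pos.ne'⟩
        have hφ0 : ∀ z, φ ⟨t+1, ht⟩ z = z.1.val % p ^ (n - i ⟨t+1, ht⟩ - 1 + 1) := by
          intro z
          simp only [hφdef, hb0, ZMod.val_zero, Nat.mul_zero, Nat.zero_mul, Nat.add_zero]
        have hfil : A.filter (fun z => φ ⟨t+1, ht⟩ z = r)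
            = A.filter (fun z => z.1.val % p ^ (n - i ⟨t+1, ht⟩ - 1 + 1) = r) := by
          apply Finset.filter_congr
          intro z _
          rw [hφ0 z]
        rw [hfil]
        have hle : n - i ⟨t+1, ht⟩ - 1 + 1 ≤ n - i ⟨t, ht'⟩ - 1 := by
          have h1 : i ⟨t, ht'⟩ < i ⟨t+1, ht⟩ := hmono (by simp [Fin.lt_def])
          have h2 := hile ⟨t+1, ht⟩
          omega
        rw [cross_eq A (fun z => z.1.val) (p ^ (n - i ⟨t, ht'⟩ - 1))
          (p ^ (n - i ⟨t+1, ht⟩ - 1 + 1)) (pow_dvd_pow p hle) (pow_pos hp.pos _) r]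
        rw [show t + 1 + 1 = 1 + (t + 1) from by ring, pow_add, pow_one]
        apply mul_dvd_mul_left
        apply Finset.dvd_sum
        intro r' hr'
        rw [Finset.mem_filter, Finset.mem_range] at hr'
        exact ih ht' r' hr'.1
    -- conclude
    have hlast : s - 1 < s := by omega
    have hcard : A.card = ∑ r ∈ Finset.range (p ^ (n - i ⟨s-1, hlast⟩ - 1)),
        (A.filter (fun z => z.1.val % p ^ (n - i ⟨s-1, hlast⟩ - 1) = r)).card :=
      Finset.card_eq_sum_card_fiberwise
        (fun z _ => Finset.mem_range.2 (Nat.mod_lt _ (pow_pos hp.pos _)))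
    rw [hcard]
    apply Finset.dvd_sum
    intro r hr
    have := main (s-1) hlast r (Finset.mem_range.1 hr)
    rwa [show s - 1 + 1 = s from by omega] at this
end

section
/- Let p be prime and Ω a tile of ℤ_{p^n} × ℤ_p with |Ω| = p^t for some 1 ≤ t ≤ n. Let I_Ω = {0 ≤ i ≤ n−1 : (p^i, 0) ∈ Z_Ω}. Then |I_Ω| = t or |I_Ω| = t − 1. -/
open Finset Complex

attribute [local instance] Classical.propDecidable

/-- `(Ω, T)` is a tiling pair: every element of `G` has a unique representation
`ω + t` with `ω ∈ Ω`, `t ∈ T`. -/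
def IsTilingPair {G : Type*} [AddCommGroup G] (Ω T : Finset G) : Prop :=
  ∀ g : G, ∃! x : G × G, x.1 ∈ Ω ∧ x.2 ∈ T ∧ x.1 + x.2 = g

lemma fourier_eq (p n i : ℕ) (hp : p.Prime) (hi : i < n)
    (A : Finset (ZMod (p ^ n) × ZMod p)) :
    fourierA p n A ((p : ZMod (p ^ n)) ^ i, (0 : ZMod p))
      = ∑ x ∈ A, Complex.exp (2 * Real.pi * Complex.I / ((p : ℂ) ^ (n - i))) ^ x.1.val := by
  haveI : NeZero (p ^ n) := ⟨pow_ne_zero _ hp.ne_zero⟩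
  haveI : NeZero p := ⟨hp.ne_zero⟩
  unfold fourierA
  refine Finset.sum_congr rfl fun x _ => ?_
  have hval : ((p : ZMod (p ^ n)) ^ i).val = p ^ i := by
    rw [show ((p : ZMod (p ^ n)) ^ i) = ((p ^ i : ℕ) : ZMod (p ^ n)) by push_cast; ring,
      ZMod.val_natCast, Nat.mod_eq_of_lt (Nat.pow_lt_pow_right hp.one_lt hi)]
  rw [hval, ZMod.val_zero, mul_zero, ← Complex.exp_nat_mul]
  congr 1
  have hp0 : (p : ℂ) ≠ 0 := Nat.cast_ne_zero.mpr hp.ne_zero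
  have hkey : (p : ℂ) ^ (n - i) * (p : ℂ) ^ i = (p : ℂ) ^ n := by
    rw [← pow_add, Nat.sub_add_cancel hi.le]
  simp only [Nat.cast_mul, Nat.cast_pow, Nat.cast_zero, mul_zero, zero_div, add_zero]
  simp only [ZMod.natCast_val]
  field_simp
  linear_combination (ZMod.cast x.1 : ℂ) * hkey

lemma count_le (p n m : ℕ) (hp : p.Prime) (A : Finset (ZMod (p ^ n) × ZMod p))
    (hcard : A.card = p ^ m) :
    ((Finset.range n).filter fun i =>
        fourierA p n A ((p : ZMod (p ^ n)) ^ i, (0 : ZMod p)) = 0).card ≤ m := by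
  haveI : Fact p.Prime := ⟨hp⟩
  set S := (Finset.range n).filter fun i =>
    fourierA p n A ((p : ZMod (p ^ n)) ^ i, (0 : ZMod p)) = 0 with hS
  set P : Polynomial ℤ := ∑ x ∈ A, Polynomial.X ^ (x.1.val) with hPdef
  have hP1 : P.eval 1 = (p : ℤ) ^ m := by
    simp only [hPdef, Polynomial.eval_finset_sum, Polynomial.eval_pow, Polynomial.eval_X,
      one_pow, Finset.sum_const, smul_eq_mul, mul_one, hcard]
    ring
  have hQdvd : (∏ i ∈ S, Polynomial.cyclotomic (p ^ (n - i)) ℚ)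
      ∣ P.map (Int.castRingHom ℚ) := by
    apply Finset.prod_dvd_of_coprime
    · intro i hi j hj hij
      rw [Finset.mem_coe, hS, Finset.mem_filter, Finset.mem_range] at hi hj
      exact Polynomial.cyclotomic.isCoprime_rat (fun h => hij (by
        have := Nat.pow_right_injective hp.two_le h
        omega))
    · intro i hi
      simp only [hS, Finset.mem_filter, Finset.mem_range] at hi
      obtain ⟨hin, hzero⟩ := hi
      set ζ : ℂ := Complex.exp (2 * Real.pi * Complex.I / ((p : ℂ) ^ (n - i))) with hζ
      have hne : p ^ (n - i) ≠ 0 := pow_ne_zero _ hp.ne_zero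
      have hprim : IsPrimitiveRoot ζ (p ^ (n - i)) := by
        have := Complex.isPrimitiveRoot_exp (p ^ (n - i)) hne
        simpa [hζ] using this
      have haev : Polynomial.aeval ζ (P.map (Int.castRingHom ℚ)) = 0 := by
        have : Polynomial.aeval ζ P = 0 := by
          rw [hPdef, map_sum]
          simp only [map_pow, Polynomial.aeval_X]
          rw [← fourier_eq p n i hp hin A]
          exact hzero
        rw [show (Int.castRingHom ℚ) = algebraMap ℤ ℚ by rfl,
          Polynomial.aeval_map_algebraMap]
        exact this
      rw [Polynomial.cyclotomic_eq_minpoly_rat hprim (Nat.pos_of_ne_zero hne)]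
      exact minpoly.dvd ℚ ζ haev
  have hmono : (∏ i ∈ S, Polynomial.cyclotomic (p ^ (n - i)) ℤ).Monic :=
    Polynomial.monic_prod_of_monic _ _ fun i _ => Polynomial.cyclotomic.monic _ ℤ
  have hQdvdZ : (∏ i ∈ S, Polynomial.cyclotomic (p ^ (n - i)) ℤ) ∣ P := by
    rw [← Polynomial.map_dvd_map (Int.castRingHom ℚ)
      Int.cast_injective hmono]
    simpa [Polynomial.map_prod, Polynomial.map_cyclotomic] using hQdvd
  have heval := Polynomial.eval_dvd (x := (1 : ℤ)) hQdvdZ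
  rw [hP1, Polynomial.eval_prod] at heval
  have hval1 : ∀ i ∈ S, Polynomial.eval 1 (Polynomial.cyclotomic (p ^ (n - i)) ℤ) = (p : ℤ) := by
    intro i hi
    simp only [hS, Finset.mem_filter, Finset.mem_range] at hi
    rw [show n - i = (n - i - 1) + 1 by omega]
    exact Polynomial.eval_one_cyclotomic_prime_pow _
  rw [Finset.prod_congr rfl hval1, Finset.prod_const] at heval
  have : (p : ℤ) ^ S.card ∣ (p : ℤ) ^ m := heval
  have hnat : p ^ S.card ∣ p ^ m := by exact_mod_cast this
  exact (Nat.pow_dvd_pow_iff_le_right hp.one_lt).mp hnat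

/-- For a tile `Ω` of `ℤ_{p^n} × ℤ_p` with `|Ω| = p^t`, the set
`I_Ω = {0 ≤ i ≤ n-1 : (p^i, 0) ∈ Z_Ω}` has cardinality `t` or `t - 1`. -/
theorem card_levels_of_tile (p n t : ℕ) (hp : p.Prime) (ht1 : 1 ≤ t) (htn : t ≤ n)
    (Ω : Finset (ZMod (p ^ n) × ZMod p)) (htile : ∃ T, IsTilingPair Ω T)
    (hcard : Ω.card = p ^ t) :
    ((Finset.range n).filter fun i =>
        fourierA p n Ω ((p : ZMod (p ^ n)) ^ i, (0 : ZMod p)) = 0).card = t ∨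
      ((Finset.range n).filter fun i =>
        fourierA p n Ω ((p : ZMod (p ^ n)) ^ i, (0 : ZMod p)) = 0).card = t - 1 := by
  haveI : NeZero (p ^ n) := ⟨pow_ne_zero _ hp.ne_zero⟩
  haveI : NeZero p := ⟨hp.ne_zero⟩
  obtain ⟨T, hT⟩ := htile
  -- the bijection (Ω ×ˢ T) → univ
  have hbij : ∀ g : ZMod (p ^ n) × ZMod p, ∃! x, x ∈ Ω ×ˢ T ∧ x.1 + x.2 = g := by
    intro g
    obtain ⟨x, ⟨hx1, hx2, hx3⟩, hxu⟩ := hT g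
    exact ⟨x, ⟨Finset.mem_product.mpr ⟨hx1, hx2⟩, hx3⟩, fun y hy => hxu y
      ⟨(Finset.mem_product.mp hy.1).1, (Finset.mem_product.mp hy.1).2, hy.2⟩⟩
  -- cardinality of T
  have hcardG : (Finset.univ : Finset (ZMod (p ^ n) × ZMod p)).card = p ^ (n + 1) := by
    simp [Finset.card_univ, ZMod.card, pow_succ]
  have hprodcard : Ω.card * T.card = p ^ (n + 1) := by
    rw [← Finset.card_product, ← hcardG]
    apply Finset.card_bij (fun x _ => x.1 + x.2)
    · intro a _; exact Finset.mem_univ _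
    · intro a ha b hb hab
      obtain ⟨x, _, hxu⟩ := hbij (a.1 + a.2)
      rw [hxu a ⟨ha, rfl⟩, hxu b ⟨hb, hab.symm⟩]
    · intro g _
      obtain ⟨x, ⟨hx1, hx2⟩, _⟩ := hbij g
      exact ⟨x, hx1, hx2⟩
  have hcardT : T.card = p ^ (n + 1 - t) := by
    have h1 : p ^ t * T.card = p ^ t * p ^ (n + 1 - t) := by
      rw [← pow_add, ← hcard, hprodcard]
      congr 1; omega
    exact Nat.eq_of_mul_eq_mul_left (pow_pos hp.pos t) h1
  -- split of zeros
  have hsplit : ∀ i ∈ Finset.range n,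
      fourierA p n Ω ((p : ZMod (p ^ n)) ^ i, (0 : ZMod p)) = 0 ∨
      fourierA p n T ((p : ZMod (p ^ n)) ^ i, (0 : ZMod p)) = 0 := by
    intro i hi
    rw [Finset.mem_range] at hi
    set ζ : ℂ := Complex.exp (2 * Real.pi * Complex.I / ((p : ℂ) ^ (n - i))) with hζ
    have hne : p ^ (n - i) ≠ 0 := pow_ne_zero _ hp.ne_zero
    have hprim : IsPrimitiveRoot ζ (p ^ (n - i)) := by
      have := Complex.isPrimitiveRoot_exp (p ^ (n - i)) hne
      simpa [hζ] using this
    have hζpn : ζ ^ (p ^ n) = 1 := by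
      rw [show n = (n - i) + i by omega, pow_add, pow_mul, hprim.pow_eq_one, one_pow]
    -- sum over the whole group is zero
    have hne1 : ζ ≠ 1 := hprim.ne_one (Nat.one_lt_pow (by omega) hp.one_lt)
    have hsum1 : (∑ a : ZMod (p ^ n), ζ ^ a.val) = 0 := by
      have h1 : (∑ a : ZMod (p ^ n), ζ ^ a.val) = ∑ k ∈ Finset.range (p ^ n), ζ ^ k := by
        apply Finset.sum_bij' (fun (a : ZMod (p ^ n)) _ => a.val)
          (fun (k : ℕ) _ => (k : ZMod (p ^ n)))
        · intro a _; exact Finset.mem_range.mpr (ZMod.val_lt a)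
        · intro k _; exact Finset.mem_univ _
        · intro a _; exact ZMod.natCast_rightInverse a
        · intro k hk
          rw [ZMod.val_natCast, Nat.mod_eq_of_lt (Finset.mem_range.mp hk)]
        · intro a _; rfl
      rw [h1, geom_sum_eq hne1, hζpn, sub_self, zero_div]
    have hzero : fourierA p n (Finset.univ : Finset (ZMod (p ^ n) × ZMod p))
        ((p : ZMod (p ^ n)) ^ i, (0 : ZMod p)) = 0 := by
      rw [fourier_eq p n i hp hi, ← hζ]
      rw [Fintype.sum_prod_type]
      simp only [Finset.sum_const, Finset.card_univ, nsmul_eq_mul]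
      rw [← Finset.mul_sum, hsum1, mul_zero]
    -- multiplicativity
    have hmul : fourierA p n Ω ((p : ZMod (p ^ n)) ^ i, (0 : ZMod p)) *
        fourierA p n T ((p : ZMod (p ^ n)) ^ i, (0 : ZMod p)) =
        fourierA p n (Finset.univ) ((p : ZMod (p ^ n)) ^ i, (0 : ZMod p)) := by
      rw [fourier_eq p n i hp hi, fourier_eq p n i hp hi, fourier_eq p n i hp hi, ← hζ,
        Finset.sum_mul_sum]
      rw [← Finset.sum_product']
      apply Finset.sum_bij (fun x _ => x.1 + x.2)
      · intro a _; exact Finset.mem_univ _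
      · intro a ha b hb hab
        obtain ⟨x, _, hxu⟩ := hbij (a.1 + a.2)
        rw [hxu a ⟨ha, rfl⟩, hxu b ⟨hb, hab.symm⟩]
      · intro g _
        obtain ⟨x, ⟨hx1, hx2⟩, _⟩ := hbij g
        exact ⟨x, hx1, hx2⟩
      · intro x _
        rw [← pow_add, Prod.fst_add, ZMod.val_add, ← pow_eq_pow_mod _ hζpn]
    rcases mul_eq_zero.mp (hmul.trans hzero) with h | h
    · exact Or.inl h
    · exact Or.inr h
  have hsub : Finset.range n ⊆
      ((Finset.range n).filter fun i =>
        fourierA p n Ω ((p : ZMod (p ^ n)) ^ i, (0 : ZMod p)) = 0) ∪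
      ((Finset.range n).filter fun i =>
        fourierA p n T ((p : ZMod (p ^ n)) ^ i, (0 : ZMod p)) = 0) := by
    intro i hi
    rcases hsplit i hi with h | h
    · exact Finset.mem_union_left _ (Finset.mem_filter.mpr ⟨hi, h⟩)
    · exact Finset.mem_union_right _ (Finset.mem_filter.mpr ⟨hi, h⟩)
  have hIle := count_le p n t hp Ω hcard
  have hJle := count_le p n (n + 1 - t) hp T hcardT
  have hn : n ≤
      ((Finset.range n).filter fun i =>
        fourierA p n Ω ((p : ZMod (p ^ n)) ^ i, (0 : ZMod p)) = 0).card +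
      ((Finset.range n).filter fun i =>
        fourierA p n T ((p : ZMod (p ^ n)) ^ i, (0 : ZMod p)) = 0).card := by
    calc n = (Finset.range n).card := (Finset.card_range n).symm
    _ ≤ _ := (Finset.card_le_card hsub).trans (Finset.card_union_le _ _)
  omega
end

section
/- Let p be prime and Ω a tile of ℤ_{p^n} × ℤ_p with |Ω| = p^t, |I_Ω| = t − 1 (where I_Ω = {i : (p^i, 0) ∈ Z_Ω}), and suppose (p^j, b) ∉ Z_Ω for every j ∈ {0,…,n−1} \ I_Ω and every b ∈ ℤ_p \ {0}. Then (0, 1) ∈ Z_Ω. -/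
open Finset Complex

attribute [local instance] Classical.propDecidable

noncomputable def ee (N : ℕ) (z : ZMod N) : ℂ :=
  Complex.exp (2 * Real.pi * Complex.I * (z.val / N))

lemma ee_natCast {N : ℕ} (hN : N ≠ 0) (k : ℕ) :
    ee N (k : ZMod N) = Complex.exp (2 * Real.pi * Complex.I * (k / N)) := by
  haveI : NeZero N := ⟨hN⟩
  have hval : ((k : ZMod N)).val = k % N := ZMod.val_natCast N k
  have hk : (k : ℂ) = (N : ℂ) * (k / N : ℕ) + ((k % N : ℕ) : ℂ) := by
    exact_mod_cast congrArg (Nat.cast : ℕ → ℂ) (Nat.div_add_mod k N).symm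
  have hNC : (N : ℂ) ≠ 0 := Nat.cast_ne_zero.mpr hN
  have key : ((k:ℂ)/N) = ((k / N : ℕ):ℂ) + ((k % N : ℕ) : ℂ)/N := by
    field_simp
    linear_combination hk
  rw [ee, hval]
  rw [show 2 * (Real.pi:ℂ) * Complex.I * ((k:ℂ) / N)
      = ((k / N : ℕ) : ℂ) * (2 * Real.pi * Complex.I)
        + 2 * Real.pi * Complex.I * (((k % N : ℕ):ℂ) / N) by
    rw [key]; ring]
  rw [Complex.exp_add, Complex.exp_nat_mul, Complex.exp_two_pi_mul_I, one_pow, one_mul]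

lemma ee_add {N : ℕ} (hN : N ≠ 0) (a b : ZMod N) :
    ee N (a + b) = ee N a * ee N b := by
  haveI : NeZero N := ⟨hN⟩
  have h1 : a + b = ((a.val + b.val : ℕ) : ZMod N) := by
    rw [Nat.cast_add, ZMod.natCast_val, ZMod.natCast_val, ZMod.cast_id, ZMod.cast_id]
  have h2 : a = ((a.val : ℕ) : ZMod N) := by simp [ZMod.natCast_val, ZMod.cast_id]
  have h3 : b = ((b.val : ℕ) : ZMod N) := by simp [ZMod.natCast_val, ZMod.cast_id]
  rw [h1, ee_natCast hN]
  nth_rewrite 2 [h2]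
  nth_rewrite 2 [h3]
  rw [ee_natCast hN, ee_natCast hN, ← Complex.exp_add]
  congr 1
  push_cast
  field_simp

lemma ee_zero {N : ℕ} (hN : N ≠ 0) : ee N 0 = 1 := by
  haveI : NeZero N := ⟨hN⟩
  simp [ee]

lemma ee_ne_zero (N : ℕ) (z : ZMod N) : ee N z ≠ 0 := Complex.exp_ne_zero _

lemma ee_eq_pow {N : ℕ} (z : ZMod N) :
    ee N z = Complex.exp (2 * Real.pi * Complex.I / N) ^ z.val := by
  rw [← Complex.exp_nat_mul, ee]
  congr 1; field_simp

lemma ee_ne_one {N : ℕ} (hN : 1 < N) {z : ZMod N} (hz : z ≠ 0) : ee N z ≠ 1 := by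
  haveI : NeZero N := ⟨by omega⟩
  rw [ee_eq_pow]
  exact (Complex.isPrimitiveRoot_exp N (by omega)).pow_ne_one_of_pos_of_lt
    (fun h => hz (by rwa [← ZMod.val_eq_zero])) (ZMod.val_lt z)

def pairB (p n : ℕ) (x d : ZMod (p ^ n) × ZMod p) : ZMod (p ^ n) :=
  ((x.1.val * d.1.val + p ^ (n - 1) * (x.2.val * d.2.val) : ℕ) : ZMod (p ^ n))

lemma pairB_comm (p n : ℕ) (x d : ZMod (p ^ n) × ZMod p) :
    pairB p n x d = pairB p n d x := by
  unfold pairB; congr 1; ring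

lemma val_nsmul_modeq {M : ℕ} [NeZero M] (c : ℕ) (a : ZMod M) :
    (c • a).val ≡ c * a.val [MOD M] := by
  rw [nsmul_eq_mul, ZMod.val_mul]
  exact (Nat.mod_modEq _ _).trans
    (by rw [ZMod.val_natCast]; exact (Nat.mod_modEq c M).mul_right a.val)

lemma scale_modeq {p n : ℕ} (hn : 0 < n) {a b : ℕ} (h : a ≡ b [MOD p]) :
    p ^ (n - 1) * a ≡ p ^ (n - 1) * b [MOD p ^ n] := by
  have := Nat.ModEq.mul_left' (c := p ^ (n - 1)) h
  rwa [← pow_succ, Nat.sub_add_cancel hn] at this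

lemma pairB_add_left {p n : ℕ} (hp : 1 < p) (hn : 0 < n) (x y d : ZMod (p ^ n) × ZMod p) :
    pairB p n (x + y) d = pairB p n x d + pairB p n y d := by
  haveI : NeZero p := ⟨by omega⟩
  haveI : NeZero (p ^ n) := ⟨pow_ne_zero n (by omega)⟩
  rw [pairB, pairB, pairB, ← Nat.cast_add, ZMod.natCast_eq_natCast_iff]
  have h1 : (x + y).1.val ≡ x.1.val + y.1.val [MOD p ^ n] := by
    show (x.1 + y.1).val ≡ _ [MOD _]
    rw [ZMod.val_add]; exact Nat.mod_modEq _ _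
  have h2 : (x + y).2.val ≡ x.2.val + y.2.val [MOD p] := by
    show (x.2 + y.2).val ≡ _ [MOD _]
    rw [ZMod.val_add]; exact Nat.mod_modEq _ _
  have h1' := h1.mul_right d.1.val
  have h2' := scale_modeq (p := p) hn (h2.mul_right d.2.val)
  have heq : (x.1.val + y.1.val) * d.1.val + p ^ (n-1) * ((x.2.val + y.2.val) * d.2.val)
      = x.1.val * d.1.val + p ^ (n-1) * (x.2.val * d.2.val)
        + (y.1.val * d.1.val + p ^ (n-1) * (y.2.val * d.2.val)) := by ring
  exact (h1'.add h2').trans (heq ▸ Nat.ModEq.refl _)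

lemma pairB_smul_right {p n : ℕ} (hp : 1 < p) (hn : 0 < n) (c : ℕ)
    (x d : ZMod (p ^ n) × ZMod p) :
    pairB p n x (c • d) = ((c * (pairB p n x d).val : ℕ) : ZMod (p ^ n)) := by
  haveI : NeZero p := ⟨by omega⟩
  haveI : NeZero (p ^ n) := ⟨pow_ne_zero n (by omega)⟩
  rw [pairB, ZMod.natCast_eq_natCast_iff]
  have hA : (c • d).1.val ≡ c * d.1.val [MOD p ^ n] := by
    show (c • d.1).val ≡ _ [MOD _]; exact val_nsmul_modeq c d.1
  have hB : (c • d).2.val ≡ c * d.2.val [MOD p] := by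
    show (c • d.2).val ≡ _ [MOD _]; exact val_nsmul_modeq c d.2
  have hK : (pairB p n x d).val
      ≡ x.1.val * d.1.val + p ^ (n-1) * (x.2.val * d.2.val) [MOD p ^ n] := by
    rw [pairB, ZMod.val_natCast]; exact Nat.mod_modEq _ _
  have h1 := hA.mul_left x.1.val
  have h2 := scale_modeq (p := p) hn (hB.mul_left x.2.val)
  have heq : x.1.val * (c * d.1.val) + p ^ (n-1) * (x.2.val * (c * d.2.val))
      = c * (x.1.val * d.1.val + p ^ (n-1) * (x.2.val * d.2.val)) := by ring
  exact (h1.add h2).trans (heq ▸ (hK.mul_left c).symm)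

lemma pairB_zero_right {p n : ℕ} (x : ZMod (p ^ n) × ZMod p) :
    pairB p n x (0, 0) = 0 := by
  simp [pairB, ZMod.val_zero]

lemma pairB_add_right {p n : ℕ} (hp : 1 < p) (hn : 0 < n) (x d d' : ZMod (p ^ n) × ZMod p) :
    pairB p n x (d + d') = pairB p n x d + pairB p n x d' := by
  rw [pairB_comm, pairB_add_left hp hn, pairB_comm, pairB_comm p n d']

lemma pairB_zero_right' {p n : ℕ} (hp : 1 < p) (hn : 0 < n) (x : ZMod (p ^ n) × ZMod p) :
    pairB p n x 0 = 0 := by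
  have := pairB_zero_right (p := p) (n := n) x
  exact this

lemma pairB_neg_right {p n : ℕ} (hp : 1 < p) (hn : 0 < n) (x d : ZMod (p ^ n) × ZMod p) :
    pairB p n x (-d) = - pairB p n x d := by
  have h := pairB_add_right hp hn x d (-d)
  rw [add_neg_cancel, pairB_zero_right' hp hn] at h
  exact eq_neg_of_add_eq_zero_left (by rw [add_comm]; exact h.symm)
  
lemma pairB_sub_right {p n : ℕ} (hp : 1 < p) (hn : 0 < n) (x d d' : ZMod (p ^ n) × ZMod p) :
    pairB p n x (d - d') = pairB p n x d - pairB p n x d' := by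
  rw [sub_eq_add_neg, pairB_add_right hp hn, pairB_neg_right hp hn, sub_eq_add_neg]

noncomputable def FF (p n : ℕ) (A : Finset (ZMod (p ^ n) × ZMod p))
    (d : ZMod (p ^ n) × ZMod p) : ℂ :=
  ∑ x ∈ A, ee (p ^ n) (pairB p n x d)

lemma fourierA_eq_FF {p n : ℕ} (hp : 1 < p) (hn : 0 < n)
    (A : Finset (ZMod (p ^ n) × ZMod p)) (d : ZMod (p ^ n) × ZMod p) :
    fourierA p n A d = FF p n A d := by
  have hpn : (p : ℕ) ^ n ≠ 0 := pow_ne_zero n (by omega)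
  refine Finset.sum_congr rfl fun x _ => ?_
  rw [pairB, ee_natCast hpn]
  congr 1
  have hpC : (p : ℂ) ≠ 0 := Nat.cast_ne_zero.mpr (by omega)
  have hpnC : ((p : ℂ)) ^ n ≠ 0 := pow_ne_zero n hpC
  have hsplit : ((p : ℂ)) ^ n = (p : ℂ) ^ (n - 1) * p := by
    rw [← pow_succ, Nat.sub_add_cancel hn]
  push_cast
  rw [hsplit]
  field_simp

lemma sum_univ_ee {p n : ℕ} [NeZero p] (hp : 1 < p) (hn : 0 < n) {d : ZMod (p ^ n) × ZMod p}
    (hd : d ≠ 0) : ∑ g : ZMod (p ^ n) × ZMod p, ee (p ^ n) (pairB p n g d) = 0 := by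
  haveI : NeZero (p ^ n) := ⟨pow_ne_zero n (by omega)⟩
  have hN1 : 1 < p ^ n := one_lt_pow₀ (by omega) (by omega)
  haveI : Fact (1 < p) := ⟨hp⟩
  haveI : Fact (1 < p ^ n) := ⟨hN1⟩
  -- find g₀ with pairB g₀ d ≠ 0
  obtain ⟨g₀, hg₀⟩ : ∃ g₀ : ZMod (p ^ n) × ZMod p, pairB p n g₀ d ≠ 0 := by
    by_cases h1 : d.1 ≠ 0
    · refine ⟨(1, 0), ?_⟩
      have : pairB p n ((1 : ZMod (p ^ n)), (0 : ZMod p)) d = d.1 := by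
        rw [pairB]
        rw [show ((1 : ZMod (p ^ n)), (0 : ZMod p)).1.val = 1 from ZMod.val_one _,
            show ((1 : ZMod (p ^ n)), (0 : ZMod p)).2.val = 0 from ZMod.val_zero]
        simp [ZMod.natCast_val, ZMod.cast_id]
      rw [this]; exact h1
    · push_neg at h1
      have h2 : d.2 ≠ 0 := by
        intro h2; exact hd (Prod.ext h1 h2)
      refine ⟨(0, 1), ?_⟩
      have : pairB p n ((0 : ZMod (p ^ n)), (1 : ZMod p)) d
          = ((p ^ (n - 1) * d.2.val : ℕ) : ZMod (p ^ n)) := by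
        rw [pairB]
        rw [show ((0 : ZMod (p ^ n)), (1 : ZMod p)).1.val = 0 from ZMod.val_zero,
            show ((0 : ZMod (p ^ n)), (1 : ZMod p)).2.val = 1 from ZMod.val_one _]
        norm_num
      rw [this]
      intro hzero
      rw [ZMod.natCast_eq_zero_iff] at hzero
      have hv1 : 0 < d.2.val := Nat.pos_of_ne_zero (fun h => h2 (by rwa [← ZMod.val_eq_zero]))
      have hv2 : d.2.val < p := ZMod.val_lt d.2
      have hlt : p ^ (n - 1) * d.2.val < p ^ n := by
        calc p ^ (n - 1) * d.2.val < p ^ (n - 1) * p := by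
              exact mul_lt_mul_of_pos_left hv2 (pow_pos (by omega) _)
          _ = p ^ n := by rw [← pow_succ, Nat.sub_add_cancel hn]
      have hpos : 0 < p ^ (n - 1) * d.2.val :=
        Nat.mul_pos (pow_pos (by omega) _) hv1
      exact absurd (Nat.le_of_dvd hpos hzero) (by omega)
  have hchi : ee (p ^ n) (pairB p n g₀ d) ≠ 1 := ee_ne_one hN1 hg₀
  have hmul : (∑ g : ZMod (p ^ n) × ZMod p, ee (p ^ n) (pairB p n g d))
      * ee (p ^ n) (pairB p n g₀ d)
      = ∑ g : ZMod (p ^ n) × ZMod p, ee (p ^ n) (pairB p n g d) := by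
    calc (∑ g : ZMod (p ^ n) × ZMod p, ee (p ^ n) (pairB p n g d))
          * ee (p ^ n) (pairB p n g₀ d)
        = ∑ g : ZMod (p ^ n) × ZMod p, ee (p ^ n) (pairB p n g d)
            * ee (p ^ n) (pairB p n g₀ d) := Finset.sum_mul _ _ _
      _ = ∑ g : ZMod (p ^ n) × ZMod p, ee (p ^ n) (pairB p n (g + g₀) d) := by
          refine Finset.sum_congr rfl fun g _ => ?_
          rw [pairB_add_left hp hn, ee_add (pow_ne_zero n (by omega))]
      _ = ∑ g : ZMod (p ^ n) × ZMod p, ee (p ^ n) (pairB p n g d) :=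
          Fintype.sum_equiv (Equiv.addRight g₀)
            (fun g => ee (p ^ n) (pairB p n (g + g₀) d))
            (fun g => ee (p ^ n) (pairB p n g d)) (fun g => rfl)
  have hz : (∑ g : ZMod (p ^ n) × ZMod p, ee (p ^ n) (pairB p n g d))
      * (ee (p ^ n) (pairB p n g₀ d) - 1) = 0 := by
    rw [mul_sub, hmul]; ring
  rcases mul_eq_zero.mp hz with h | h
  · exact h
  · exact absurd (sub_eq_zero.mp h) hchi

lemma ee_pow {N : ℕ} (hN : N ≠ 0) (k : ℕ) :
    Complex.exp (2 * Real.pi * Complex.I / N) ^ k = ee N (k : ZMod N) := by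
  rw [ee_natCast hN, ← Complex.exp_nat_mul]
  congr 1; ring

lemma tiling_prod {p n : ℕ} [NeZero p] (hp : 1 < p) (hn : 0 < n)
    {Ω T : Finset (ZMod (p ^ n) × ZMod p)} (hT : IsTilingPair Ω T)
    (d : ZMod (p ^ n) × ZMod p) :
    FF p n Ω d * FF p n T d = ∑ g : ZMod (p ^ n) × ZMod p, ee (p ^ n) (pairB p n g d) := by
  haveI : NeZero (p ^ n) := ⟨pow_ne_zero n (by omega)⟩
  rw [FF, FF, Finset.sum_mul_sum]
  calc (∑ ω ∈ Ω, ∑ τ ∈ T, ee (p ^ n) (pairB p n ω d) * ee (p ^ n) (pairB p n τ d))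
      = ∑ x ∈ Ω ×ˢ T, ee (p ^ n) (pairB p n (x.1 + x.2) d) := by
        rw [Finset.sum_product]
        refine Finset.sum_congr rfl fun ω _ => Finset.sum_congr rfl fun τ _ => ?_
        rw [pairB_add_left hp hn, ee_add (pow_ne_zero n (by omega))]
    _ = ∑ g ∈ Finset.univ, ee (p ^ n) (pairB p n g d) := by
        refine Finset.sum_bij (fun a _ => a.1 + a.2) (fun a ha => Finset.mem_univ _)
          ?_ ?_ (fun a ha => rfl)
        · intro a₁ ha₁ a₂ ha₂ heq
          rw [Finset.mem_product] at ha₁ ha₂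
          obtain ⟨x, hx, hun⟩ := hT (a₁.1 + a₁.2)
          have e1 := hun a₁ ⟨ha₁.1, ha₁.2, rfl⟩
          have e2 := hun a₂ ⟨ha₂.1, ha₂.2, heq.symm⟩
          rw [e1, e2]
        · intro g _
          obtain ⟨x, hx, _⟩ := hT g
          exact ⟨x, Finset.mem_product.mpr ⟨hx.1, hx.2.1⟩, hx.2.2⟩

lemma tiling_card {p n : ℕ} [NeZero p]
    {Ω T : Finset (ZMod (p ^ n) × ZMod p)} (hT : IsTilingPair Ω T) :
    Ω.card * T.card = p ^ n * p := by
  haveI : NeZero (p ^ n) := ⟨pow_ne_zero n (NeZero.ne p)⟩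
  have hb : (Ω ×ˢ T).card = (Finset.univ : Finset (ZMod (p ^ n) × ZMod p)).card := by
    refine Finset.card_bij (fun a _ => a.1 + a.2) (fun a ha => Finset.mem_univ _) ?_ ?_
    · intro a₁ ha₁ a₂ ha₂ heq
      rw [Finset.mem_product] at ha₁ ha₂
      obtain ⟨x, hx, hun⟩ := hT (a₁.1 + a₁.2)
      have e1 := hun a₁ ⟨ha₁.1, ha₁.2, rfl⟩
      have e2 := hun a₂ ⟨ha₂.1, ha₂.2, heq.symm⟩
      rw [e1, e2]
    · intro g _
      obtain ⟨x, hx, _⟩ := hT g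
      exact ⟨x, Finset.mem_product.mpr ⟨hx.1, hx.2.1⟩, hx.2.2⟩
  rw [Finset.card_product] at hb
  rw [hb, Finset.card_univ, Fintype.card_prod, ZMod.card, ZMod.card]

lemma FF_galois {p n : ℕ} (hp : 1 < p) (hn : 0 < n)
    (Ω : Finset (ZMod (p ^ n) × ZMod p)) {c : ℕ}
    (hc : Nat.Coprime c (p ^ n)) {d : ZMod (p ^ n) × ZMod p}
    (h : FF p n Ω d = 0) : FF p n Ω (c • d) = 0 := by
  have hpn : p ^ n ≠ 0 := pow_ne_zero n (by omega)
  have hpos : 0 < p ^ n := Nat.pos_of_ne_zero hpn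
  set ζ : ℂ := Complex.exp (2 * Real.pi * Complex.I / ((p ^ n : ℕ) : ℂ)) with hζdef
  have hζ : IsPrimitiveRoot ζ (p ^ n) := Complex.isPrimitiveRoot_exp _ hpn
  have hζc : IsPrimitiveRoot (ζ ^ c) (p ^ n) := hζ.pow_of_coprime c hc
  set P : Polynomial ℚ := ∑ x ∈ Ω, Polynomial.X ^ (pairB p n x d).val with hP
  have hev : ∀ z : ℂ, Polynomial.aeval z P = ∑ x ∈ Ω, z ^ (pairB p n x d).val := by
    intro z; rw [hP, map_sum]; simp
  have h0 : Polynomial.aeval ζ P = 0 := by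
    rw [hev, ← h, FF]
    refine Finset.sum_congr rfl fun x _ => ?_
    rw [ee_eq_pow]
  have hmin : minpoly ℚ ζ = minpoly ℚ (ζ ^ c) := by
    rw [← Polynomial.cyclotomic_eq_minpoly_rat hζ hpos,
        ← Polynomial.cyclotomic_eq_minpoly_rat hζc hpos]
  have h0c : Polynomial.aeval (ζ ^ c) P = 0 := by
    obtain ⟨q, hq⟩ := minpoly.dvd ℚ ζ h0
    rw [hq, map_mul, hmin, minpoly.aeval, zero_mul]
  rw [hev] at h0c
  rw [FF, ← h0c]
  refine Finset.sum_congr rfl fun x _ => ?_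
  rw [pairB_smul_right hp hn, ← pow_mul, ee_pow hpn]

lemma int_comb {p : ℕ} (hp : 1 < p) {m : ℕ} (j : Fin m → ℕ) (hmono : StrictMono j)
    (c : Fin m → ℤ) (hc : ∀ i, (c i).natAbs < p) (k : Fin m) (hk : c k ≠ 0)
    (hmin : ∀ i, i < k → c i = 0) :
    ∃ W : ℤ, ¬ (p : ℤ) ∣ W ∧ ∑ i, c i * (p : ℤ) ^ (j i) = (p : ℤ) ^ (j k) * W := by
  classical
  refine ⟨∑ i ∈ Finset.univ.filter (fun i => k ≤ i), c i * (p : ℤ) ^ (j i - j k), ?_, ?_⟩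
  · have hsplit : Finset.univ.filter (fun i : Fin m => k ≤ i)
        = insert k (Finset.univ.filter (fun i => k < i)) := by
      ext i
      simp only [Finset.mem_filter, Finset.mem_univ, true_and, Finset.mem_insert]
      constructor
      · intro h
        rcases eq_or_lt_of_le h with h' | h'
        · exact Or.inl h'.symm
        · exact Or.inr h'
      · rintro (rfl | h)
        · exact le_refl _
        · exact le_of_lt h
    rw [hsplit, Finset.sum_insert (by simp)]
    intro hdvd
    have hdvd2 : (p : ℤ) ∣ ∑ i ∈ Finset.univ.filter (fun i => k < i),
        c i * (p : ℤ) ^ (j i - j k) := by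
      refine Finset.dvd_sum fun i hi => ?_
      have hki : k < i := (Finset.mem_filter.mp hi).2
      have : 1 ≤ j i - j k := by
        have := hmono hki; omega
      exact Dvd.dvd.mul_left (dvd_pow_self (p : ℤ) (by omega) |>.trans
        (pow_dvd_pow (p : ℤ) this)) _
    have hck : (p : ℤ) ∣ c k * (p : ℤ) ^ (j k - j k) := (Int.dvd_add_right hdvd2).mp ?later
    · rw [Nat.sub_self, pow_zero, mul_one] at hck
      have : p ∣ (c k).natAbs := Int.natAbs_dvd_natAbs.mpr (by simpa using hck)
      have hpos : 0 < (c k).natAbs := Int.natAbs_pos.mpr hk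
      exact absurd (Nat.le_of_dvd hpos this) (by have := hc k; omega)
    · rwa [add_comm] at hdvd
  · rw [← Finset.sum_filter_add_sum_filter_not Finset.univ (fun i => k ≤ i)]
    have hzero : ∑ i ∈ Finset.univ.filter (fun i : Fin m => ¬ k ≤ i),
        c i * (p : ℤ) ^ (j i) = 0 := by
      refine Finset.sum_eq_zero fun i hi => ?_
      have : i < k := lt_of_not_ge (Finset.mem_filter.mp hi).2
      rw [hmin i this, zero_mul]
    rw [hzero, add_zero, Finset.mul_sum]
    refine Finset.sum_congr rfl fun i hi => ?_
    have hki : k ≤ i := (Finset.mem_filter.mp hi).2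
    have hjk : j k ≤ j i := hmono.monotone hki
    rw [show (p : ℤ) ^ (j k) * (c i * (p : ℤ) ^ (j i - j k))
        = c i * ((p : ℤ) ^ (j k) * (p : ℤ) ^ (j i - j k)) from by ring,
      ← pow_add, Nat.add_sub_cancel' hjk]

lemma isUnit_int_cast {p n : ℕ} (hp : p.Prime) (hn : 0 < n) {W : ℤ} (hW : ¬ (p : ℤ) ∣ W) :
    IsUnit ((W : ZMod (p ^ n))) := by
  haveI : NeZero (p ^ n) := ⟨pow_ne_zero n hp.ne_zero⟩
  have hnd : ¬ p ∣ W.natAbs := fun h => hW (Int.natAbs_dvd_natAbs.mp (by simpa using h))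
  have hco : Nat.Coprime W.natAbs (p ^ n) :=
    (Nat.coprime_pow_right_iff hn _ _).mpr (Nat.Coprime.symm (hp.coprime_iff_not_dvd.mpr hnd))
  have hu : IsUnit ((W.natAbs : ℕ) : ZMod (p ^ n)) :=
    (ZMod.isUnit_iff_coprime _ _).mpr hco
  rcases Int.natAbs_eq W with h | h
  · rw [h, Int.cast_natCast]; exact hu
  · rw [h, Int.cast_neg, Int.cast_natCast]; exact hu.neg

lemma exists_nat_inv {p n : ℕ} (hp : 1 < p) (hn : 0 < n) {u : ZMod (p ^ n)} (hu : IsUnit u) :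
    ∃ c' : ℕ, Nat.Coprime c' (p ^ n) ∧ ((c' : ℕ) : ZMod (p ^ n)) = u⁻¹ := by
  haveI : NeZero (p ^ n) := ⟨pow_ne_zero n (by omega)⟩
  have hcast : (((u⁻¹).val : ℕ) : ZMod (p ^ n)) = u⁻¹ := ZMod.natCast_rightInverse u⁻¹
  refine ⟨(u⁻¹).val, ?_, hcast⟩
  rw [← ZMod.isUnit_iff_coprime]
  rw [hcast]
  exact IsUnit.of_mul_eq_one u (ZMod.inv_mul_of_unit u hu)

/-- Let `Ω` be a tile of `ℤ_{p^n} × ℤ_p` with `|Ω| = p^t` and `|I_Ω| = t - 1`, where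
`I_Ω = {0 ≤ i ≤ n-1 : (p^i, 0) ∈ Z_Ω}`. If `(p^j, b) ∉ Z_Ω` for every
`j ∈ {0,…,n-1} \ I_Ω` and every `b ≠ 0`, then `(0, 1) ∈ Z_Ω`. -/
theorem zero_one_mem_zeros (p n t : ℕ) (hp : p.Prime) (ht1 : 1 ≤ t) (htn : t ≤ n)
    (Ω : Finset (ZMod (p ^ n) × ZMod p)) (htile : ∃ T, IsTilingPair Ω T)
    (hcard : Ω.card = p ^ t)
    (IΩ : Finset ℕ)
    (hIΩ : IΩ = (Finset.range n).filter fun i =>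
      fourierA p n Ω ((p : ZMod (p ^ n)) ^ i, (0 : ZMod p)) = 0)
    (hIcard : IΩ.card = t - 1)
    (hnot : ∀ j ∈ Finset.range n \ IΩ, ∀ b : ZMod p, b ≠ 0 →
      fourierA p n Ω ((p : ZMod (p ^ n)) ^ j, b) ≠ 0) :
    fourierA p n Ω ((0 : ZMod (p ^ n)), (1 : ZMod p)) = 0 := by
  classical
  have hp2 : 1 < p := hp.one_lt
  have hn : 0 < n := lt_of_lt_of_le ht1 htn
  haveI : NeZero p := ⟨by omega⟩
  haveI : NeZero (p ^ n) := ⟨pow_ne_zero n (by omega)⟩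
  haveI : Fact p.Prime := ⟨hp⟩
  have hpn0 : (p : ℕ) ^ n ≠ 0 := pow_ne_zero n (by omega)
  have hFA : ∀ d, fourierA p n Ω d = FF p n Ω d := fourierA_eq_FF hp2 hn Ω
  rw [hFA]
  by_contra hcontra
  -- the set J of "non-vanishing levels"
  set J : Finset ℕ := Finset.range n \ IΩ with hJ
  have hIsub : IΩ ⊆ Finset.range n := by rw [hIΩ]; exact Finset.filter_subset _ _
  set m := n - t + 1 with hm
  have hJcard : J.card = m := by
    rw [hJ, Finset.card_sdiff_of_subset hIsub, Finset.card_range, hIcard]; omega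
  let σ := J.orderIsoOfFin hJcard
  let j : Fin m → ℕ := fun i => (σ i : ℕ)
  have hjmono : StrictMono j := fun a b hab => by
    have := σ.strictMono hab
    exact_mod_cast this
  have hjJ : ∀ i, j i ∈ J := fun i => (σ i).2
  have hjn : ∀ i, j i < n := fun i => Finset.mem_range.mp (Finset.mem_sdiff.mp (hjJ i)).1
  -- Step A : nonvanishing of FF Ω on relevant points
  have keyA : ∀ (x : ZMod (p ^ n)) (y : ZMod p),
      (x = 0 ∨ ∃ (i : Fin m) (W : ℤ), ¬ (p : ℤ) ∣ W ∧
        x = (W : ZMod (p ^ n)) * (p : ZMod (p ^ n)) ^ (j i)) →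
      FF p n Ω (x, y) ≠ 0 := by
    rintro x y (rfl | ⟨i, W, hW, rfl⟩)
    · by_cases hy : y = 0
      · subst hy
        intro h0
        have hval : FF p n Ω ((0 : ZMod (p ^ n)), (0 : ZMod p)) = (Ω.card : ℂ) := by
          rw [FF, Finset.sum_congr rfl fun g _ => by rw [pairB_zero_right, ee_zero hpn0]]
          simp
        rw [hval, hcard] at h0
        exact absurd h0 (Nat.cast_ne_zero.mpr (pow_ne_zero t (by omega)))
      · intro h0
        have hyinv : (y⁻¹ : ZMod p) ≠ 0 := inv_ne_zero hy
        set c := (y⁻¹ : ZMod p).val with hc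
        have hcp : ¬ p ∣ c := by
          have h1 : c < p := ZMod.val_lt _
          have h2 : c ≠ 0 := fun h => hyinv (by rwa [← ZMod.val_eq_zero])
          intro hd
          exact absurd (Nat.le_of_dvd (Nat.pos_of_ne_zero h2) hd) (by omega)
        have hco : Nat.Coprime c (p ^ n) :=
          (Nat.coprime_pow_right_iff hn _ _).mpr ((hp.coprime_iff_not_dvd.mpr hcp).symm)
        have hgal := FF_galois hp2 hn Ω hco h0
        have hsm : c • ((0 : ZMod (p ^ n)), y) = ((0 : ZMod (p ^ n)), (1 : ZMod p)) := by
          have hcy : (c : ZMod p) = y⁻¹ := ZMod.natCast_rightInverse y⁻¹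
          apply Prod.ext
          · show c • (0 : ZMod (p ^ n)) = 0
            exact smul_zero c
          · show c • y = 1
            rw [nsmul_eq_mul, hcy, inv_mul_cancel₀ hy]
        rw [hsm] at hgal
        exact hcontra hgal
    · intro h0
      have hu := isUnit_int_cast (n := n) hp hn hW
      obtain ⟨c', hc'co, hc'cast⟩ := exists_nat_inv hp2 hn hu
      have hgal := FF_galois hp2 hn Ω hc'co h0
      have hsm : c' • ((W : ZMod (p ^ n)) * (p : ZMod (p ^ n)) ^ (j i), y)
          = ((p : ZMod (p ^ n)) ^ (j i), (c' : ZMod p) * y) := by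
        apply Prod.ext
        · show c' • ((W : ZMod (p ^ n)) * (p : ZMod (p ^ n)) ^ (j i)) = _
          rw [nsmul_eq_mul, hc'cast, ← mul_assoc, ZMod.inv_mul_of_unit _ hu, one_mul]
        · show c' • y = (c' : ZMod p) * y
          rw [nsmul_eq_mul]
      rw [hsm] at hgal
      have hmem : j i ∈ Finset.range n \ IΩ := by
        have := hjJ i
        rwa [hJ] at this
      by_cases hbz : (c' : ZMod p) * y = 0
      · rw [hbz] at hgal
        have hjnotI : j i ∉ IΩ := (Finset.mem_sdiff.mp hmem).2
        refine hjnotI ?_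
        rw [hIΩ]
        exact Finset.mem_filter.mpr ⟨(Finset.mem_sdiff.mp hmem).1, by rw [hFA]; exact hgal⟩
      · exact hnot (j i) hmem _ hbz (by rw [hFA]; exact hgal)
  -- Step B : the tiling complement
  obtain ⟨T, hT⟩ := htile
  have hTcard : T.card = p ^ m := by
    have h1 : Ω.card * T.card = p ^ n * p := tiling_card hT
    rw [hcard] at h1
    have h2 : p ^ t * (p ^ m) = p ^ n * p := by
      rw [← pow_add, ← pow_succ]
      congr 1
      omega
    exact Nat.eq_of_mul_eq_mul_left (pow_pos (by omega) t) (h1.trans h2.symm)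
  -- difference vectors
  let fvec : (Fin m → Fin p) → ZMod (p ^ n) := fun a =>
    ((∑ i, (a i : ℕ) * p ^ (j i) : ℕ) : ZMod (p ^ n))
  have hdiff : ∀ a b : Fin m → Fin p, a ≠ b →
      ∃ (i : Fin m) (W : ℤ), ¬ (p : ℤ) ∣ W ∧
        fvec a - fvec b = (W : ZMod (p ^ n)) * (p : ZMod (p ^ n)) ^ (j i) := by
    intro a b hab
    let c : Fin m → ℤ := fun i => ((a i : ℕ) : ℤ) - ((b i : ℕ) : ℤ)
    have hcb : ∀ i, (c i).natAbs < p := by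
      intro i
      have h1 : (a i : ℕ) < p := (a i).isLt
      have h2 : (b i : ℕ) < p := (b i).isLt
      simp only [c]
      omega
    have hKne : (Finset.univ.filter fun i => c i ≠ 0).Nonempty := by
      obtain ⟨i, hi⟩ := Function.ne_iff.mp hab
      refine ⟨i, Finset.mem_filter.mpr ⟨Finset.mem_univ _, ?_⟩⟩
      simp only [c]
      intro h
      exact hi (Fin.ext (by omega))
    set k := (Finset.univ.filter fun i => c i ≠ 0).min' hKne with hk
    have hkmem := (Finset.univ.filter fun i => c i ≠ 0).min'_mem hKne
    have hck : c k ≠ 0 := (Finset.mem_filter.mp hkmem).2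
    have hmin : ∀ i, i < k → c i = 0 := by
      intro i hik
      by_contra hne
      have hle : k ≤ i := (Finset.univ.filter fun i => c i ≠ 0).min'_le i
        (Finset.mem_filter.mpr ⟨Finset.mem_univ _, hne⟩)
      exact absurd hle (not_le.mpr hik)
    obtain ⟨W, hW, hsum⟩ := int_comb hp2 j hjmono c hcb k hck hmin
    refine ⟨k, W, hW, ?_⟩
    have hcast : ((∑ i, c i * (p : ℤ) ^ (j i) : ℤ) : ZMod (p ^ n)) = fvec a - fvec b := by
      simp only [fvec, c]
      push_cast
      simp [sub_mul, Finset.sum_sub_distrib]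
    rw [← hcast, hsum]
    push_cast
    ring
  have hpowne : ∀ i : Fin m, ((p : ZMod (p ^ n)) ^ (j i)) ≠ 0 := by
    intro i hzero
    have : ((p ^ (j i) : ℕ) : ZMod (p ^ n)) = 0 := by push_cast; exact hzero
    rw [ZMod.natCast_eq_zero_iff] at this
    exact absurd ((Nat.pow_dvd_pow_iff_le_right hp2).mp this) (by have := hjn i; omega)
  have hfvec_inj : Function.Injective fvec := by
    intro a b hab
    by_contra hne
    obtain ⟨i, W, hW, heq⟩ := hdiff a b hne
    rw [hab, sub_self] at heq
    have hu := isUnit_int_cast (n := n) hp hn hW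
    have : (p : ZMod (p ^ n)) ^ (j i) = 0 := by
      calc (p : ZMod (p ^ n)) ^ (j i)
          = ((W : ZMod (p ^ n))⁻¹ * (W : ZMod (p ^ n))) * (p : ZMod (p ^ n)) ^ (j i) := by
            rw [ZMod.inv_mul_of_unit _ hu, one_mul]
        _ = (W : ZMod (p ^ n))⁻¹ * ((W : ZMod (p ^ n)) * (p : ZMod (p ^ n)) ^ (j i)) := by ring
        _ = 0 := by rw [← heq, mul_zero]
    exact hpowne i this
  -- Step C : linear independence and counting
  let Φ : (Fin m → Fin p) × ZMod p → ZMod (p ^ n) × ZMod p := fun a => (fvec a.1, a.2)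
  have hΦinj : Function.Injective Φ := by
    intro a b hab
    have h1 : fvec a.1 = fvec b.1 := (Prod.ext_iff.mp hab).1
    have h2 : a.2 = b.2 := (Prod.ext_iff.mp hab).2
    exact Prod.ext (hfvec_inj h1) h2
  have hdiffA : ∀ a b : (Fin m → Fin p) × ZMod p, a ≠ b → FF p n Ω (Φ a - Φ b) ≠ 0 := by
    intro a b hab
    have : Φ a - Φ b = (fvec a.1 - fvec b.1, a.2 - b.2) := rfl
    rw [this]
    refine keyA _ _ ?_
    by_cases h : a.1 = b.1
    · left; rw [h, sub_self]
    · right; obtain ⟨i, W, hW, heq⟩ := hdiff a.1 b.1 h; exact ⟨i, W, hW, heq⟩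
  have hFFT : ∀ a b : (Fin m → Fin p) × ZMod p, a ≠ b → FF p n T (Φ a - Φ b) = 0 := by
    intro a b hab
    have hd0 : Φ a - Φ b ≠ 0 := sub_ne_zero.mpr (fun h => hab (hΦinj h))
    have := tiling_prod hp2 hn hT (Φ a - Φ b)
    rw [sum_univ_ee hp2 hn hd0] at this
    rcases mul_eq_zero.mp this with h | h
    · exact absurd h (hdiffA a b hab)
    · exact h
  -- linear independence
  have hTpos : (0 : ℕ) < T.card := by rw [hTcard]; exact pow_pos (by omega) m
  let v : ((Fin m → Fin p) × ZMod p) → (↥T → ℂ) := fun i g => ee (p ^ n) (pairB p n (g : ZMod (p ^ n) × ZMod p) (Φ i))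
  have hli : LinearIndependent ℂ v := by
    rw [Fintype.linearIndependent_iff]
    intro lam hlam i₀
    have hzero : ∀ g : ↥T, (∑ i, lam i • v i) g = 0 := fun g => by rw [hlam]; rfl
    have hexp : ∀ g : ↥T, (∑ i, lam i • v i) g = ∑ i, lam i * v i g := by
      intro g
      rw [Finset.sum_apply]
      exact Finset.sum_congr rfl fun i _ => rfl
    have hE : ∑ g : ↥T, (∑ i, lam i * v i g)
        * ee (p ^ n) (pairB p n (g : ZMod (p ^ n) × ZMod p) (-Φ i₀)) = 0 := by
      refine Finset.sum_eq_zero fun g _ => ?_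
      rw [← hexp g, hzero g, zero_mul]
    have hswap : ∑ g : ↥T, (∑ i, lam i * v i g)
          * ee (p ^ n) (pairB p n (g : ZMod (p ^ n) × ZMod p) (-Φ i₀))
        = ∑ i, lam i * ∑ g : ↥T,
            ee (p ^ n) (pairB p n (g : ZMod (p ^ n) × ZMod p) (Φ i - Φ i₀)) := by
      calc ∑ g : ↥T, (∑ i, lam i * v i g)
              * ee (p ^ n) (pairB p n (g : ZMod (p ^ n) × ZMod p) (-Φ i₀))
          = ∑ g : ↥T, ∑ i, lam i * (v i g
              * ee (p ^ n) (pairB p n (g : ZMod (p ^ n) × ZMod p) (-Φ i₀))) := by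
            refine Finset.sum_congr rfl fun g _ => ?_
            rw [Finset.sum_mul]
            exact Finset.sum_congr rfl fun i _ => by ring
        _ = ∑ i, ∑ g : ↥T, lam i * (v i g
              * ee (p ^ n) (pairB p n (g : ZMod (p ^ n) × ZMod p) (-Φ i₀))) := Finset.sum_comm
        _ = ∑ i, lam i * ∑ g : ↥T,
              ee (p ^ n) (pairB p n (g : ZMod (p ^ n) × ZMod p) (Φ i - Φ i₀)) := by
            refine Finset.sum_congr rfl fun i _ => ?_
            rw [Finset.mul_sum]
            refine Finset.sum_congr rfl fun g _ => ?_
            congr 1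
            show ee (p ^ n) (pairB p n (g : ZMod (p ^ n) × ZMod p) (Φ i))
                * ee (p ^ n) (pairB p n (g : ZMod (p ^ n) × ZMod p) (-Φ i₀)) = _
            rw [← ee_add hpn0, ← pairB_add_right hp2 hn, sub_eq_add_neg]
    rw [hswap] at hE
    have hsingle : ∑ i, lam i * ∑ g : ↥T,
        ee (p ^ n) (pairB p n (g : ZMod (p ^ n) × ZMod p) (Φ i - Φ i₀))
        = lam i₀ * T.card := by
      rw [Finset.sum_eq_single_of_mem i₀ (Finset.mem_univ _) ?side]
      · congr 1
        rw [sub_self]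
        rw [Finset.sum_congr rfl fun g _ => by rw [pairB_zero_right' hp2 hn, ee_zero hpn0]]
        rw [Finset.sum_const, Finset.card_univ, Fintype.card_coe, nsmul_eq_mul, mul_one]
      · intro i _ hne
        have : (∑ g : ↥T, ee (p ^ n)
            (pairB p n (g : ZMod (p ^ n) × ZMod p) (Φ i - Φ i₀))) = 0 := by
          rw [Finset.sum_coe_sort T
            (fun g => ee (p ^ n) (pairB p n g (Φ i - Φ i₀)))]
          exact hFFT i i₀ hne
        rw [this, mul_zero]
    rw [hsingle] at hE
    rcases mul_eq_zero.mp hE with h | h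
    · exact h
    · exact absurd h (Nat.cast_ne_zero.mpr (by omega))
  have hcardle := hli.fintype_card_le_finrank
  rw [Module.finrank_fintype_fun_eq_card, Fintype.card_coe, hTcard] at hcardle
  rw [Fintype.card_prod, Fintype.card_fun, Fintype.card_fin, Fintype.card_fin, ZMod.card] at hcardle
  nlinarith [pow_pos (show 0 < p by omega) m]
end
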